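/- Let R = k[[t]] and M an R-module. Then RHom_R(k((t)), M) is computed by the derived limit of the tower (t^n R ⊗_R M)_n shifted appropriately; in particular H^i(RHom_R(k((t)), M)) = 0 for all i outside {0, 1}. Hence the functor RHom_R(k((t)), −) : D(R) → D(R) has cohomological dimension at most 1 on modules. -/

import Mathlib

/-!
As `k((t))` is the localization of `R = k⟦t⟧` away from `t`, it is `R[Y]/(tY - 1)`, and `tY - 1`
is a non-zero-divisor of `R[Y]` (its constant coefficient is a unit). So
`0 → R[Y] --(tY - 1)--> R[Y] → k((t)) → 0` is a projective resolution of length one (with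
`R[Y] ≅ ⨁ₙ R`, it is the telescope resolution of the colimit of `R --t--> R --t--> ⋯`).
Computing `Ext` with it, `Hom(resolution, M)` vanishes in degrees `≥ 2`, hence so does `Ext`.
-/

open CategoryTheory Limits ZeroObject Polynomial
open scoped nonZeroDivisors

noncomputable section

namespace CategoryTheory.ShortComplex

variable {C : Type*} [Category* C] [Abelian C] (S : ShortComplex C)

def twoTermComplex : ChainComplex C ℕ where
  X
    | 0 => S.X₂
    | 1 => S.X₁
    | _ + 2 => 0
  d
    | 1, 0 => S.f
    | _, _ => 0
  shape i j h := by
    rcases i with _ | _ | i <;> rcases j with _ | j <;> first | rfl | simp at h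
  d_comp_d' := by
    rintro _ _ k (rfl : _ + 1 = _) (rfl : k + 1 = _)
    exact zero_comp

lemma isZero_twoTermComplex_X (n : ℕ) : IsZero (S.twoTermComplex.X (n + 2)) :=
  isZero_zero C

def twoTermComplexπ : S.twoTermComplex ⟶ (ChainComplex.single₀ C).obj S.X₃ :=
  (ChainComplex.toSingle₀Equiv _ _).symm ⟨S.g, S.zero⟩

lemma twoTermComplexπ_f_zero : S.twoTermComplexπ.f 0 = S.g :=
  ChainComplex.toSingle₀Equiv_symm_apply_f_zero _ _

variable {S}

lemma ShortExact.quasiIso_twoTermComplexπ (hS : S.ShortExact) :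
    _root_.QuasiIso S.twoTermComplexπ := by
  constructor
  rintro (_ | _ | n)
  · rw [ChainComplex.quasiIsoAt₀_iff, ShortComplex.quasiIso_iff_of_zeros' _ rfl rfl rfl]
    refine (exact_and_epi_g_iff_of_iso ?_).2 ⟨hS.exact, hS.epi_g⟩
    exact isoMk (Iso.refl _) (Iso.refl _) (Iso.refl _)
      (by exact (Category.id_comp S.f).trans (Category.comp_id S.f).symm)
      (by exact (Category.id_comp S.g).trans ((twoTermComplexπ_f_zero S).symm.trans
        (Category.comp_id _).symm))
  · rw [quasiIsoAt_iff_exactAt' _ _ (ChainComplex.exactAt_succ_single_obj _ 0),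
      HomologicalComplex.exactAt_iff' _ 2 1 0 (by simp) (by simp),
      exact_iff_mono _ ((isZero_twoTermComplex_X S 0).eq_of_src _ _)]
    exact hS.mono_f
  · rw [quasiIsoAt_iff_exactAt' _ _ (ChainComplex.exactAt_succ_single_obj _ (n + 1)),
      HomologicalComplex.exactAt_iff]
    exact exact_of_isZero_X₂ _ (isZero_twoTermComplex_X S n)

end CategoryTheory.ShortComplex

namespace CategoryTheory.ProjectiveResolution

variable {C : Type*} [Category* C] [Abelian C] {S : ShortComplex C} [Projective S.X₁]
  [Projective S.X₂]

def ofShortExact (hS : S.ShortExact) : ProjectiveResolution S.X₃ where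
  complex := S.twoTermComplex
  projective
    | 0 => ‹Projective S.X₂›
    | 1 => ‹Projective S.X₁›
    | n + 2 => (S.isZero_twoTermComplex_X n).projective
  π := S.twoTermComplexπ
  quasiIso := hS.quasiIso_twoTermComplexπ

end CategoryTheory.ProjectiveResolution

lemma CategoryTheory.ShortComplex.ShortExact.isZero_Ext_add_two {C : Type*} [Category* C]
    [Abelian C] {R : Type*} [Ring R] [Linear R C] [EnoughProjectives C] {S : ShortComplex C}
    [Projective S.X₁] [Projective S.X₂] (hS : S.ShortExact) (Y : C) (n : ℕ) :
    IsZero (((Ext R C (n + 2)).obj (Opposite.op S.X₃)).obj Y) := by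
  refine IsZero.of_iso ?_ ((ProjectiveResolution.ofShortExact hS).isoExt (n + 2) Y)
  rw [← HomologicalComplex.exactAt_iff_isZero_homology, HomologicalComplex.exactAt_iff]
  refine ShortComplex.exact_of_isZero_X₂ _ ?_
  rw [ModuleCat.isZero_iff_subsingleton]
  exact ⟨(S.isZero_twoTermComplex_X n).eq_of_src⟩

lemma Polynomial.C_mul_X_sub_one_mem_nonZeroDivisors {R : Type*} [CommRing R] (r : R) :
    C r * X - 1 ∈ R[X]⁰ :=
  mem_nonzeroDivisors_of_coeff_mem 0 (by simpa using isUnit_one.neg.mem_nonZeroDivisors)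

namespace IsLocalization.Away

variable {R : Type*} [CommRing R] (r : R) (S : Type*) [CommRing S] [Algebra R S]
  [IsLocalization.Away r S]

/-- The quotient map `R[X] → R[X]/(rX - 1) ≃ S`, sending `X` to `1/r`. -/
def mkₐ : R[X] →ₐ[R] S :=
  ((Localization.awayEquivAdjoin r).symm.trans
    (IsLocalization.algEquiv (Submonoid.powers r) _ S)).toAlgHom.comp (AdjoinRoot.mkₐ _)

lemma mkₐ_surjective : Function.Surjective (mkₐ r S) := by
  rw [mkₐ, AlgHom.coe_comp, AlgEquiv.coe_toAlgHom]
  exact (AlgEquiv.surjective _).comp AdjoinRoot.mk_surjective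

lemma mkₐ_eq_zero_iff {p : R[X]} : mkₐ r S p = 0 ↔ C r * X - 1 ∣ p := by
  rw [mkₐ, AlgHom.comp_apply, AlgEquiv.coe_toAlgHom, EmbeddingLike.map_eq_zero_iff]
  exact AdjoinRoot.mk_eq_zero

lemma exact_mulLeft_mkₐ :
    Function.Exact (LinearMap.mulLeft R (C r * X - 1)) (mkₐ r S).toLinearMap := by
  intro p
  rw [AlgHom.toLinearMap_apply, mkₐ_eq_zero_iff, dvd_def]
  simp only [Set.mem_range, LinearMap.mulLeft_apply, eq_comm]

end IsLocalization.Away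

universe u

namespace IsLocalization.Away

variable {R : Type u} [CommRing R] (r : R) (S : Type u) [CommRing S] [Algebra R S]
  [IsLocalization.Away r S]

abbrev shortComplex : ShortComplex (ModuleCat.{u} R) :=
  ModuleCat.shortComplexOfCompEqZero (LinearMap.mulLeft R (C r * X - 1)) (mkₐ r S).toLinearMap
    (by exact (exact_mulLeft_mkₐ r S).linearMap_comp_eq_zero)

lemma shortExact_shortComplex : (shortComplex r S).ShortExact :=
  ModuleCat.shortComplex_shortExact _ (exact_mulLeft_mkₐ r S)
    (isRegular_iff_mem_nonZeroDivisors.2 (C_mul_X_sub_one_mem_nonZeroDivisors r)).left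
    (mkₐ_surjective r S)

end IsLocalization.Away

/-- Let `R = k⟦t⟧` and `M` an `R`-module.  The complex `RHom_R(k((t)), M)` has
cohomology concentrated in degrees `{0, 1}`: `H^i(RHom_R(k((t)), M)) = Ext^i_R(k((t)), M)`
vanishes for `i ≥ 2` (and trivially for `i < 0`).  Hence `RHom_R(k((t)), −)` has
cohomological dimension at most `1` on modules. -/
theorem stmt14 (k : Type) [Field k] (M : ModuleCat (PowerSeries k)) (n : ℕ)
    (hn : 2 ≤ n) :
    Subsingleton
      (((Ext (PowerSeries k) (ModuleCat (PowerSeries k)) n).obj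
        (Opposite.op (ModuleCat.of (PowerSeries k) (LaurentSeries k)))).obj M) := by
  obtain ⟨m, rfl⟩ := Nat.exists_eq_add_of_le' hn
  have hS := IsLocalization.Away.shortExact_shortComplex (PowerSeries.X : PowerSeries k)
    (LaurentSeries k)
  exact ModuleCat.isZero_iff_subsingleton.1 (hS.isZero_Ext_add_two M m)

end
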